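/- arXiv:math/0608351 — 6 statements merged into one kernel-verified Lean document; each statement's English description precedes it below -/
import Mathlib

section
/- Arithmetic core of the ramification estimate for the Gauss map of pseudo-algebraic minimal surfaces in R^3 (totally ramified value number): Let G, k, d, r₀, l₀, n₀, n_r be natural numbers with d ≥ 1, k ≥ 1 and 2G − 2 + k > 0. Let μ₁, …, μ_k be integers with μ_j ≥ 1 for all j and 2d − (μ₁ + ⋯ + μ_k) = 2G − 2. Let ν₁, …, ν_{l₀} be integers with 2 ≤ ν_i ≤ d for all i. Assume (a) d·r₀ − n₀ ≤ k, (b) d·l₀ − n_r ≤ Σ_{i=1}^{l₀} d/ν_i (as rational numbers), and (c) n₀ + n_r ≤ 2(d + G − 1). Set R = 2d/(2G − 2 + k). Then R ≥ 1, and r₀ + Σ_{i=1}^{l₀} (1 − 1/ν_i) ≤ 2 + 2/R. Moreover, if μ_j ≥ 2 for every j, then R > 1. -/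
/-!
Riemann–Roch together with `μ_j ≥ m` gives `2G - 2 + m k ≤ 2d`, which is `R ≥ 1` for `m = 1` and
`R > 1` for `m = 2`. For the main bound, (a) and (b) say `d r₀ ≤ n₀ + k` and
`d ∑ (1 - 1/ν_i) ≤ n_r`; adding them and using Riemann–Hurwitz (c) gives
`d (r₀ + ∑ (1 - 1/ν_i)) ≤ 2d + (2G - 2 + k)`, i.e. the bound `2 + 2/R` after dividing by `d`.
-/

open Finset

theorem two_mul_sub_two_add_mul_card_le_of_le {k : ℕ} {d G m : ℤ} {μ : Fin k → ℤ}
    (hμ : ∀ j, m ≤ μ j) (hRR : 2 * d - ∑ j, μ j = 2 * G - 2) :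
    2 * G - 2 + m * k ≤ 2 * d := by
  have hsum : k • m ≤ ∑ j, μ j := by
    simpa using card_nsmul_le_sum univ μ m fun j _ ↦ hμ j
  rw [nsmul_eq_mul] at hsum
  linarith

theorem mul_sum_one_sub_one_div {ι K : Type*} [Fintype ι] [Field K] (d : K) (ν : ι → K) :
    d * ∑ i, (1 - 1 / ν i) = d * Fintype.card ι - ∑ i, d / ν i := by
  simp only [mul_sum, mul_sub, mul_one, mul_one_div, sum_sub_distrib, sum_const, card_univ,
    nsmul_eq_mul]

theorem div_mul_div_left_eq {K : Type*} [Field K] {a : K} (ha : a ≠ 0) (d S : K) :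
    a / (a * d / S) = S / d := by
  rw [div_div_eq_mul_div, mul_div_mul_left S d ha]

theorem stmt_0_general (G k d r₀ l₀ n₀ nr : ℕ) (hk : 1 ≤ k)
    (hGk : 0 < 2 * (G : ℤ) - 2 + k)
    (μ : Fin k → ℤ) (hμ : ∀ j, 1 ≤ μ j)
    (hRR : 2 * (d : ℤ) - ∑ j, μ j = 2 * G - 2)
    (ν : Fin l₀ → ℤ)
    (ha : (d : ℤ) * r₀ - n₀ ≤ k)
    (hb : (d : ℚ) * l₀ - nr ≤ ∑ i, (d : ℚ) / (ν i : ℚ))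
    (hc : (n₀ : ℤ) + nr ≤ 2 * ((d : ℤ) + G - 1)) :
    1 ≤ 2 * (d : ℚ) / (2 * G - 2 + k) ∧
    (r₀ : ℚ) + ∑ i, (1 - 1 / (ν i : ℚ)) ≤ 2 + 2 / (2 * (d : ℚ) / (2 * G - 2 + k)) ∧
    ((∀ j, 2 ≤ μ j) → 1 < 2 * (d : ℚ) / (2 * G - 2 + k)) := by
  have hS : (0 : ℚ) < 2 * G - 2 + k := by exact_mod_cast hGk
  have hRR₁ := two_mul_sub_two_add_mul_card_le_of_le hμ hRR
  have hd : (0 : ℚ) < d := by exact_mod_cast (show (0 : ℤ) < d by linarith)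
  refine ⟨(one_le_div hS).2 (by exact_mod_cast (by linarith : 2 * (G : ℤ) - 2 + k ≤ 2 * d)),
    ?_, fun hμ₂ ↦ (one_lt_div hS).2 ?_⟩
  · have hr : (d : ℚ) * r₀ ≤ n₀ + k := by
      have : (d : ℚ) * r₀ - n₀ ≤ k := by exact_mod_cast ha
      linarith
    have hs : (d : ℚ) * ∑ i, (1 - 1 / (ν i : ℚ)) ≤ nr := by
      rw [mul_sum_one_sub_one_div, Fintype.card_fin]
      linarith
    have hcQ : (n₀ : ℚ) + nr ≤ 2 * ((d : ℚ) + G - 1) := by exact_mod_cast hc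
    rw [div_mul_div_left_eq two_ne_zero, ← sub_le_iff_le_add', le_div_iff₀ hd]
    linarith
  · have := two_mul_sub_two_add_mul_card_le_of_le hμ₂ hRR
    exact_mod_cast (by linarith : 2 * (G : ℤ) - 2 + k < 2 * d)

/-- Arithmetic core of the ramification estimate for the Gauss map of pseudo-algebraic
minimal surfaces in ℝ³ (totally ramified value number), Theorem 3.14 of the paper. -/
theorem stmt_0 (G k d r₀ l₀ n₀ nr : ℕ) (hd : 1 ≤ d) (hk : 1 ≤ k)
    (hGk : 0 < 2 * (G : ℤ) - 2 + k)
    (μ : Fin k → ℤ) (hμ : ∀ j, 1 ≤ μ j)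
    (hRR : 2 * (d : ℤ) - ∑ j, μ j = 2 * G - 2)
    (ν : Fin l₀ → ℤ) (hν₂ : ∀ i, 2 ≤ ν i) (hνd : ∀ i, ν i ≤ (d : ℤ))
    (ha : (d : ℤ) * r₀ - n₀ ≤ k)
    (hb : (d : ℚ) * l₀ - nr ≤ ∑ i, (d : ℚ) / (ν i : ℚ))
    (hc : (n₀ : ℤ) + nr ≤ 2 * ((d : ℤ) + G - 1)) :
    1 ≤ 2 * (d : ℚ) / (2 * G - 2 + k) ∧
    (r₀ : ℚ) + ∑ i, (1 - 1 / (ν i : ℚ)) ≤ 2 + 2 / (2 * (d : ℚ) / (2 * G - 2 + k)) ∧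
    ((∀ j, 2 ≤ μ j) → 1 < 2 * (d : ℚ) / (2 * G - 2 + k)) :=
  stmt_0_general G k d r₀ l₀ n₀ nr hk hGk μ hμ hRR ν ha hb hc
end

section
/- Arithmetic core of the exceptional-value estimate for the Gauss map of pseudo-algebraic minimal surfaces in R^3: Let G, k, d, r₀, l, n₀, n_b be natural numbers with d ≥ 1, k ≥ 1 and 2G − 2 + k > 0. Let μ₁, …, μ_k be integers with μ_j ≥ 1 for all j and 2d − (μ₁ + ⋯ + μ_k) = 2G − 2. Assume n₀ + n_b = 2(d + G − 1), n_b ≥ l, and d·r₀ − n₀ ≤ k. Set R = 2d/(2G − 2 + k). Then, as rational numbers, r₀ ≤ 2 + 2/R − l/d; in particular r₀ ≤ 2 + 2/R ≤ 4, and if μ_j ≥ 2 for every j then r₀ ≤ 3. -/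
/-- Arithmetic core of the exceptional-value estimate for the Gauss map of
pseudo-algebraic minimal surfaces in ℝ³ (Theorem 3.14 of the paper). -/
theorem stmt_1 (G k d r₀ l n₀ nb : ℕ) (hd : 1 ≤ d) (hk : 1 ≤ k)
    (hGk : 0 < 2 * (G : ℤ) - 2 + k)
    (μ : Fin k → ℤ) (hμ : ∀ j, 1 ≤ μ j)
    (hRR : 2 * (d : ℤ) - ∑ j, μ j = 2 * G - 2)
    (hRH : (n₀ : ℤ) + nb = 2 * ((d : ℤ) + G - 1))
    (hnb : (l : ℤ) ≤ nb)
    (ha : (d : ℤ) * r₀ - n₀ ≤ k) :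
    (r₀ : ℚ) ≤ 2 + 2 / (2 * (d : ℚ) / (2 * G - 2 + k)) - (l : ℚ) / d ∧
    (r₀ : ℚ) ≤ 2 + 2 / (2 * (d : ℚ) / (2 * G - 2 + k)) ∧
    2 + 2 / (2 * (d : ℚ) / (2 * G - 2 + k)) ≤ 4 ∧
    ((∀ j, 2 ≤ μ j) → r₀ ≤ 3) := by
  have hdQ : (0:ℚ) < d := by exact_mod_cast hd
  have hcQ : (0:ℚ) < 2 * (G:ℚ) - 2 + k := by exact_mod_cast hGk
  have hsum : (k:ℤ) ≤ ∑ j, μ j := by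
    calc (k:ℤ) = ∑ _j : Fin k, (1:ℤ) := by simp
    _ ≤ ∑ j, μ j := Finset.sum_le_sum (fun j _ => hμ j)
  -- key integer inequality
  have hkey : (d:ℤ) * r₀ ≤ 2 * d + (2 * G - 2 + k) - l := by linarith
  have hkeyQ : (d:ℚ) * r₀ ≤ 2 * d + (2 * (G:ℚ) - 2 + k) - l := by exact_mod_cast hkey
  have heq : 2 / (2 * (d:ℚ) / (2 * G - 2 + k)) = (2 * (G:ℚ) - 2 + k) / d := by
    rw [div_div_eq_mul_div, mul_comm, eq_div_iff hdQ.ne']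
    field_simp
  have h1 : (r₀:ℚ) ≤ (2 * d + (2 * (G:ℚ) - 2 + k) - l) / d := by
    rw [le_div_iff₀ hdQ]; linarith
  have h2 : 2 + (2 * (G:ℚ) - 2 + k) / d - (l:ℚ) / d
      = (2 * d + (2 * (G:ℚ) - 2 + k) - l) / d := by
    field_simp
  have hfirst : (r₀ : ℚ) ≤ 2 + 2 / (2 * (d : ℚ) / (2 * G - 2 + k)) - (l : ℚ) / d := by
    rw [heq, h2]; exact h1
  have hld : (0:ℚ) ≤ (l:ℚ) / d := by positivity
  have hsecond : (r₀ : ℚ) ≤ 2 + 2 / (2 * (d : ℚ) / (2 * G - 2 + k)) := by linarith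
  have hc2d : (2 * (G:ℚ) - 2 + k) ≤ 2 * d := by
    have : (2 * (G:ℤ) - 2 + k) ≤ 2 * d := by linarith
    exact_mod_cast this
  have hthird : 2 + 2 / (2 * (d : ℚ) / (2 * G - 2 + k)) ≤ 4 := by
    rw [heq]
    have : (2 * (G:ℚ) - 2 + k) / d ≤ 2 := by
      rw [div_le_iff₀ hdQ]; linarith
    linarith
  refine ⟨hfirst, hsecond, hthird, ?_⟩
  intro h2μ
  have hsum2 : 2 * (k:ℤ) ≤ ∑ j, μ j := by
    calc 2 * (k:ℤ) = ∑ _j : Fin k, (2:ℤ) := by simp [mul_comm]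
    _ ≤ ∑ j, μ j := Finset.sum_le_sum (fun j _ => h2μ j)
  by_contra hcon
  push_neg at hcon
  have h4 : (4:ℤ) ≤ r₀ := by exact_mod_cast hcon
  have hdZ : (1:ℤ) ≤ d := by exact_mod_cast hd
  have hkZ : (1:ℤ) ≤ k := by exact_mod_cast hk
  nlinarith
end

section
/- Arithmetic core of the unicity theorem for Gauss maps of pseudo-algebraic minimal surfaces in R^3: Let G, k, d, q be natural numbers with d ≥ 1, k ≥ 1 and 2G − 2 + k > 0, and let μ₁, …, μ_k be integers with μ_j ≥ 1 for all j and 2d − (μ₁ + ⋯ + μ_k) = 2G − 2. Let δ₁, …, δ_q be natural numbers with δ₁ + ⋯ + δ_q ≤ 2d, and assume q·d ≤ k + (δ₁ + ⋯ + δ_q) + 2(d + G − 1). Set R = 2d/(2G − 2 + k). Then q ≤ 4 + 2/R (as rational numbers); in particular q ≤ 6, and if μ_j ≥ 2 for every j then q ≤ 5. -/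
/-- Arithmetic core of the unicity theorem for Gauss maps of pseudo-algebraic
minimal surfaces in ℝ³ (Theorem 3.18 of the paper). -/
theorem stmt_2 (G k d q : ℕ) (hd : 1 ≤ d) (hk : 1 ≤ k)
    (hGk : 0 < 2 * (G : ℤ) - 2 + k)
    (μ : Fin k → ℤ) (hμ : ∀ j, 1 ≤ μ j)
    (hRR : 2 * (d : ℤ) - ∑ j, μ j = 2 * G - 2)
    (δ : Fin q → ℕ) (hδ : ∑ j, δ j ≤ 2 * d)
    (hcount : (q : ℤ) * d ≤ k + (∑ j, (δ j : ℤ)) + 2 * ((d : ℤ) + G - 1)) :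
    (q : ℚ) ≤ 4 + 2 / (2 * (d : ℚ) / (2 * G - 2 + k)) ∧
    q ≤ 6 ∧
    ((∀ j, 2 ≤ μ j) → q ≤ 5) := by
  have hdZ : (1 : ℤ) ≤ d := by exact_mod_cast hd
  have hδZ : (∑ j, (δ j : ℤ)) ≤ 2 * d := by
    have := hδ
    push_cast [← Nat.cast_sum] at this ⊢
    exact_mod_cast hδ
  -- main integer bound: q*d ≤ (2G-2+k) + 4d
  have hmain : (q : ℤ) * d ≤ (2 * (G : ℤ) - 2 + k) + 4 * d := by linarith
  -- ∑ μ ≥ k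
  have hSum : (k : ℤ) ≤ ∑ j, μ j := by
    calc (k : ℤ) = ∑ _j : Fin k, (1 : ℤ) := by simp
    _ ≤ ∑ j, μ j := Finset.sum_le_sum fun j _ => hμ j
  have hA2d : (2 * (G : ℤ) - 2 + k) ≤ 2 * d := by linarith
  refine ⟨?_, ?_, ?_⟩
  · have hdQ : (0 : ℚ) < d := by positivity
    have hAQ : (0 : ℚ) < 2 * (G : ℚ) - 2 + k := by exact_mod_cast hGk
    have hmQ : (q : ℚ) * d ≤ (2 * (G : ℚ) - 2 + k) + 4 * d := by exact_mod_cast hmain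
    rw [div_div_eq_mul_div]
    have h1 : (q : ℚ) - 4 ≤ 2 * (2 * (G : ℚ) - 2 + k) / (2 * d) := by
      rw [le_div_iff₀ (by positivity)]
      nlinarith
    linarith
  · have h6 : (q : ℤ) * d ≤ 6 * d := by linarith
    have : (q : ℤ) ≤ 6 := le_of_mul_le_mul_right h6 (by linarith : (0:ℤ) < d)
    exact_mod_cast this
  · intro h2
    have hSum2 : 2 * (k : ℤ) ≤ ∑ j, μ j := by
      calc 2 * (k : ℤ) = ∑ _j : Fin k, (2 : ℤ) := by simp [mul_comm]
      _ ≤ ∑ j, μ j := Finset.sum_le_sum fun j _ => h2 j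
    have hkZ : (1 : ℤ) ≤ k := by exact_mod_cast hk
    have h6 : (q : ℤ) * d < 6 * d := by linarith
    have : (q : ℤ) < 6 := lt_of_mul_lt_mul_right h6 (by linarith : (0:ℤ) ≤ d)
    omega
end

section
/- Nochka's theorem: Let r, n, q be natural numbers with 1 ≤ r ≤ n and 2n − r + 1 ≤ q. Let L₁, …, L_q be nonzero linear forms on ℂ^{r+1} that are in n-subgeneral position, i.e., for every subset B ⊆ {1,…,q} with #B = n + 1, the linear span of {L_j : j ∈ B} is the whole dual space of ℂ^{r+1}. Then there exist a function ω : {1,…,q} → ℝ with 0 < ω(j) ≤ 1 for all j, and a real number θ ≥ 1, such that: (i) ω(j)·θ ≤ 1 for all j; (ii) q − 2n + r − 1 = θ·(Σ_{j=1}^{q} ω(j) − r − 1); (iii) for every nonempty B ⊆ {1,…,q} with #B ≤ n + 1, Σ_{j∈B} ω(j) ≤ dim span{L_j : j ∈ B}; (iv) (n+1)/(r+1) ≤ θ ≤ (2n−r+1)/(r+1); (v) for all real numbers λ₁, …, λ_q with λ_j ≥ 1, and every subset Y ⊆ {1,…,q} with 0 < #Y ≤ n + 1, there exists M ⊆ Y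 with #M = dim span{L_j : j ∈ Y} such that {L_j : j ∈ M} is a basis of span{L_j : j ∈ Y} and Π_{j∈Y} λ_j^{ω(j)} ≤ Π_{j∈M} λ_j. -/
/-!
Only the rank function `B ↦ dim span {L j | j ∈ B}` matters: it is monotone, submodular,
equal to `1` on singletons, at most `r + 1`, and equal to `r + 1` on every `(n + 1)`-set.
For a set `A` of rank at most `r` put `θ_A = (2n - r + 1 - |A|) / (r + 1 - rank A)`.
Nochka's chain starts at `∅` and passes from a flat `A` to the closure of an extension `C` of
minimal rank density `(rank C - rank A) / (|C| - |A|)` among those with density at most `θ_A⁻¹`,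
giving the new elements that density as weight; `θ_A` decreases along the chain. When no such
extension of the last flat `F` is left, every element outside `F` gets weight `θ_F⁻¹`, and
`θ = θ_F`. Minimality of the densities and submodularity bound the weight of any set by its rank;
the greedy algorithm (drop an index of least `log λ_j`, recurse) then yields (v) from (iii).
-/

open Finset

structure RankFunction (ι : Type*) [DecidableEq ι] where
  rank : Finset ι → ℕ
  rank_mono : Monotone rank
  rank_union_add_rank_inter_le : ∀ A B, rank (A ∪ B) + rank (A ∩ B) ≤ rank A + rank B
  rank_empty : rank ∅ = 0
  rank_singleton : ∀ j, rank {j} = 1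

structure SubgeneralRankFunction (ι : Type*) [DecidableEq ι] (n r : ℕ)
    extends RankFunction ι where
  rank_le : ∀ B, rank B ≤ r + 1
  rank_eq_of_card_eq : ∀ B : Finset ι, B.card = n + 1 → rank B = r + 1

namespace RankFunction

variable {ι : Type*} [DecidableEq ι] (R : RankFunction ι)

theorem rank_insert_le (j : ι) (A : Finset ι) : R.rank (insert j A) ≤ R.rank A + 1 := by
  have := R.rank_union_add_rank_inter_le {j} A
  rw [← insert_eq, R.rank_singleton] at this
  omega

theorem rank_union_le_add_card (A S : Finset ι) : R.rank (A ∪ S) ≤ R.rank A + S.card := by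
  induction S using Finset.induction with
  | empty => simp
  | insert j S hj ih =>
    rw [union_insert, card_insert_of_notMem hj]
    linarith [R.rank_insert_le j (A ∪ S)]

theorem rank_le_card (A : Finset ι) : R.rank A ≤ A.card := by
  simpa [R.rank_empty] using R.rank_union_le_add_card ∅ A

theorem rank_union_add_rank_le_of_subset {A A₁ : Finset ι} (h : A ⊆ A₁) (B : Finset ι) :
    R.rank (B ∪ A₁) + R.rank (B ∩ A₁ ∪ A) ≤ R.rank (B ∪ A) + R.rank A₁ := by
  have := R.rank_union_add_rank_inter_le (B ∪ A) A₁
  rwa [union_assoc, union_eq_right.2 h, union_inter_distrib_right, inter_eq_left.2 h] at this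

theorem rank_insert_eq_of_rank_eq {M Y : Finset ι} (hMY : M ⊆ Y) (h : R.rank M = R.rank Y)
    (j : ι) : R.rank (insert j M) = R.rank (insert j Y) := by
  refine le_antisymm (R.rank_mono (insert_subset_insert j hMY)) ?_
  have := R.rank_union_add_rank_le_of_subset hMY {j}
  have := R.rank_mono (show M ⊆ {j} ∩ Y ∪ M from subset_union_right)
  rw [← insert_eq, ← insert_eq] at *
  omega

theorem rank_union_eq_of_forall_rank_insert_eq {A S : Finset ι}
    (hS : ∀ j ∈ S, R.rank (insert j A) = R.rank A) : R.rank (A ∪ S) = R.rank A := by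
  induction S using Finset.induction with
  | empty => simp
  | insert j S hj ih =>
    rw [forall_mem_insert] at hS
    have := R.rank_union_add_rank_le_of_subset (subset_union_left (s₁ := A) (s₂ := S)) {j}
    have := R.rank_mono (show A ⊆ {j} ∩ (A ∪ S) ∪ A from subset_union_right)
    have := R.rank_mono (show A ⊆ insert j (A ∪ S) from subset_union_left.trans (subset_insert _ _))
    rw [← insert_eq, ← insert_eq, hS.1, ih hS.2] at *
    rw [union_insert]
    omega

theorem exists_subset_sum_mul_le (ω : ι → ℝ) (Y : Finset ι) (c : ι → ℝ)
    (hc : ∀ j ∈ Y, 0 ≤ c j) (hω : ∀ B ⊆ Y, ∑ j ∈ B, ω j ≤ R.rank B) :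
    ∃ M ⊆ Y, M.card = R.rank Y ∧ R.rank M = R.rank Y ∧
      ∑ j ∈ Y, ω j * c j ≤ ∑ j ∈ M, c j := by
  induction Y using Finset.strongInduction generalizing c with
  | H Y ih =>
  rcases Y.eq_empty_or_nonempty with rfl | hY
  · exact ⟨∅, subset_rfl, by simp [R.rank_empty], rfl, by simp⟩
  obtain ⟨j₀, hj₀, hmin⟩ := exists_min_image Y c hY
  obtain ⟨M', hM'Y', hM'card, hM'rank, hM'sum⟩ := ih (Y.erase j₀) (erase_ssubset hj₀)
    (fun j => c j - c j₀) (fun j hj => sub_nonneg.2 (hmin j (mem_of_mem_erase hj)))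
    (fun B hB => hω B (hB.trans (erase_subset _ _)))
  have hY : insert j₀ (Y.erase j₀) = Y := insert_erase hj₀
  have hrank_insert : R.rank (insert j₀ M') = R.rank Y :=
    hY ▸ R.rank_insert_eq_of_rank_eq hM'Y' hM'rank j₀
  have hkey : ∑ j ∈ Y, ω j * c j ≤
      ∑ j ∈ M', c j + c j₀ * ((R.rank Y : ℝ) - R.rank (Y.erase j₀)) := by
    have hshift : ∑ j ∈ Y, ω j * c j =
        ∑ j ∈ Y.erase j₀, ω j * (c j - c j₀) + c j₀ * ∑ j ∈ Y, ω j := by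
      rw [sum_erase _ (by simp), mul_sum, ← sum_add_distrib]
      exact sum_congr rfl fun j _ => by ring
    have hM' : ∑ j ∈ M', (c j - c j₀) = ∑ j ∈ M', c j - R.rank (Y.erase j₀) * c j₀ := by
      rw [sum_sub_distrib, sum_const, nsmul_eq_mul, hM'card]
    have := mul_le_mul_of_nonneg_left (hω Y subset_rfl) (hc j₀ hj₀)
    linarith
  have hj₀M' : j₀ ∉ M' := fun h => notMem_erase j₀ Y (hM'Y' h)
  rcases (R.rank_mono (erase_subset j₀ Y)).eq_or_lt with hrank | hrank
  · refine ⟨M', hM'Y'.trans (erase_subset _ _), hM'card.trans hrank, hM'rank.trans hrank, ?_⟩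
    simpa [hrank] using hkey
  · have hrank' : R.rank Y = R.rank (Y.erase j₀) + 1 := by
      have := hY ▸ R.rank_insert_le j₀ (Y.erase j₀)
      omega
    refine ⟨insert j₀ M', hY ▸ insert_subset_insert j₀ hM'Y', ?_, hrank_insert, ?_⟩
    · rw [card_insert_of_notMem hj₀M', hM'card, hrank']
    · rw [hrank', Nat.cast_add, Nat.cast_one] at hkey
      rw [sum_insert hj₀M']
      linarith

def IsFlat (A : Finset ι) : Prop := ∀ j ∉ A, R.rank A < R.rank (insert j A)

theorem IsFlat.rank_lt {R : RankFunction ι} {A C : Finset ι} (hA : R.IsFlat A) (h : A ⊂ C) :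
    R.rank A < R.rank C := by
  obtain ⟨j, hjC, hjA⟩ := exists_of_ssubset h
  exact (hA j hjA).trans_le (R.rank_mono (insert_subset hjC h.subset))

theorem isFlat_empty : R.IsFlat ∅ := fun j _ => by
  simp [R.rank_empty, R.rank_singleton]

variable [Fintype ι]

def closure (A : Finset ι) : Finset ι := {j | R.rank (insert j A) = R.rank A}

theorem subset_closure (A : Finset ι) : A ⊆ R.closure A := fun j hj => by
  simp [closure, insert_eq_self.2 hj]

theorem rank_closure (A : Finset ι) : R.rank (R.closure A) = R.rank A := by
  rw [← union_eq_right.2 (R.subset_closure A)]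
  exact R.rank_union_eq_of_forall_rank_insert_eq fun j hj => by simpa [closure] using hj

theorem isFlat_closure (A : Finset ι) : R.IsFlat (R.closure A) := by
  intro j hj
  have hne : R.rank (insert j A) ≠ R.rank A := by simpa [closure] using hj
  have := R.rank_mono (insert_subset_insert j (R.subset_closure A))
  have := R.rank_mono (subset_insert j A)
  rw [R.rank_closure]
  omega

end RankFunction

theorem le_mul_of_sub_le_of_le {x D t m θ : ℝ} (ht : 0 < t) (hm : 0 ≤ m) (hθ : t + m ≤ θ * t)
    (hDt : t ≤ D) (hDx : x - m ≤ D) : x ≤ θ * D := by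
  have hθ1 : 1 ≤ θ := by nlinarith
  by_cases hx : x ≤ t + m
  · nlinarith
  · nlinarith

namespace SubgeneralRankFunction

variable {ι : Type*} [DecidableEq ι] {n r : ℕ} (R : SubgeneralRankFunction ι n r)

theorem rank_eq_of_le_card {B : Finset ι} (hB : n + 1 ≤ B.card) : R.rank B = r + 1 := by
  obtain ⟨C, hCB, hC⟩ := exists_subset_card_eq hB
  have := R.rank_mono hCB
  have := R.rank_le B
  have := R.rank_eq_of_card_eq C hC
  omega

theorem card_le_of_rank_le {B : Finset ι} (hB : R.rank B ≤ r) : B.card ≤ n := by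
  by_contra! h
  have := R.rank_eq_of_le_card h
  omega

theorem card_add_le_rank_add [Fintype ι] (hι : n + 1 ≤ Fintype.card ι) {B : Finset ι}
    (hB : B.card ≤ n + 1) : B.card + r ≤ R.rank B + n := by
  obtain ⟨C, hBC, hC⟩ := exists_superset_card_eq hB (by simpa using hι)
  have := R.rank_eq_of_card_eq C hC
  have := R.rank_union_le_add_card B (C \ B)
  rw [union_sdiff_of_subset hBC, card_sdiff_of_subset hBC] at this
  omega

noncomputable def nochkaConst (F : Finset ι) : ℝ :=
  (2 * n - r + 1 - F.card) / (r + 1 - R.rank F)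

theorem corank_pos {F : Finset ι} (hF : R.rank F ≤ r) : (0 : ℝ) < r + 1 - R.rank F := by
  have : (R.rank F : ℝ) ≤ r := by exact_mod_cast hF
  linarith

theorem nochkaConst_mul_corank {F : Finset ι} (hF : R.rank F ≤ r) :
    R.nochkaConst F * (r + 1 - R.rank F) = 2 * n - r + 1 - F.card :=
  div_mul_cancel₀ _ (R.corank_pos hF).ne'

def IsSteepExtension (A C : Finset ι) : Prop :=
  R.rank C ≤ r ∧ A ⊂ C ∧ R.nochkaConst A * (R.rank C - R.rank A) ≤ C.card - A.card

noncomputable def rankDensity (A C : Finset ι) : ℝ :=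
  (R.rank C - R.rank A) / (C.card - A.card)

theorem nochkaConst_pos (hrn : r ≤ n) {F : Finset ι} (hF : R.rank F ≤ r) :
    0 < R.nochkaConst F := by
  have : (F.card : ℝ) ≤ n := by exact_mod_cast R.card_le_of_rank_le hF
  have : (r : ℝ) ≤ n := by exact_mod_cast hrn
  exact div_pos (by linarith) (R.corank_pos hF)

theorem sub_rank_le_nochkaConst_mul_corank [Fintype ι] (hι : n + 1 ≤ Fintype.card ι)
    {F : Finset ι} (hF : R.rank F ≤ r) :
    (n : ℝ) + 1 - R.rank F ≤ R.nochkaConst F * (r + 1 - R.rank F) := by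
  have hFlow : (F.card : ℝ) + r ≤ R.rank F + n := by
    exact_mod_cast R.card_add_le_rank_add hι ((R.card_le_of_rank_le hF).trans n.le_succ)
  rw [R.nochkaConst_mul_corank hF]
  linarith

/-- With `Δc = |C| - |A|`, `Δd = rank C - rank A` and `θ_C = s / t` we have
`θ_A = (Δc + s) / (Δd + t)`; steepness says `θ_A ≤ Δc / Δd`, so the mediant `θ_A` lies between
`θ_C` and `Δc / Δd`. -/
theorem IsSteepExtension.nochkaConst_le_and_mul_le {R : SubgeneralRankFunction ι n r}
    {A C : Finset ι} (h : R.IsSteepExtension A C) :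
    R.nochkaConst C ≤ R.nochkaConst A ∧
      R.nochkaConst C * (R.rank C - R.rank A) ≤ C.card - A.card := by
  obtain ⟨hCr, hAC, hsteep⟩ := h
  have htC := R.corank_pos hCr
  have htA := R.corank_pos ((R.rank_mono hAC.subset).trans hCr)
  unfold nochkaConst at *
  rw [div_mul_eq_mul_div, div_le_iff₀ htA] at hsteep
  have key : (2 * n - r + 1 - C.card : ℝ) * (R.rank C - R.rank A) ≤
      (C.card - A.card) * (r + 1 - R.rank C) := by
    linear_combination hsteep
  refine ⟨(div_le_div_iff₀ htC htA).2 ?_, ?_⟩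
  · linear_combination key
  · rwa [div_mul_eq_mul_div, div_le_iff₀ htC]

theorem exists_isFlat_isSteepExtension_minimal [Fintype ι] (hrn : r ≤ n) {A : Finset ι}
    (h : ∃ C, R.IsSteepExtension A C) :
    ∃ A₁, R.IsFlat A₁ ∧ R.IsSteepExtension A A₁ ∧
      ∀ C, A ⊆ C → R.rank C ≤ r →
        (C.card - A.card) * R.rankDensity A A₁ ≤ R.rank C - R.rank A := by
  obtain ⟨C₁, hC₁r, hAC₁, hC₁⟩ := h
  obtain ⟨C₀, hC₀, hmin⟩ := exists_min_image ({C | R.rank C ≤ r ∧ A ⊂ C} : Finset (Finset ι))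
    (R.rankDensity A) ⟨C₁, by simp [hC₁r, hAC₁]⟩
  simp only [mem_filter, mem_univ, true_and] at hC₀ hmin
  obtain ⟨hC₀r, hAC₀⟩ := hC₀
  set A₁ := R.closure C₀
  have hA₁r : R.rank A₁ ≤ r := (R.rank_closure C₀).trans_le hC₀r
  have hAA₁ : A ⊂ A₁ := hAC₀.trans_subset (R.subset_closure C₀)
  have hcard_pos : ∀ {C : Finset ι}, A ⊂ C → (0 : ℝ) < C.card - A.card := fun {C} hC => by
    have : (A.card : ℝ) < C.card := by exact_mod_cast card_lt_card hC
    linarith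
  have hA₁min : ∀ C, R.rank C ≤ r → A ⊂ C → R.rankDensity A A₁ ≤ R.rankDensity A C := by
    refine fun C hCr hAC => le_trans ?_ (hmin C ⟨hCr, hAC⟩)
    unfold rankDensity
    rw [R.rank_closure]
    refine div_le_div_of_nonneg_left ?_ (hcard_pos hAC₀) ?_
    · exact sub_nonneg.2 (by exact_mod_cast R.rank_mono hAC₀.subset)
    · exact sub_le_sub_right (by exact_mod_cast card_le_card (R.subset_closure C₀)) _
  refine ⟨A₁, R.isFlat_closure C₀, ⟨hA₁r, hAA₁, ?_⟩, fun C hAC hCr => ?_⟩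
  · have hθ := R.nochkaConst_pos hrn ((R.rank_mono hAC₁.subset).trans hC₁r)
    rw [← div_le_one (hcard_pos hAA₁), mul_div_assoc]
    rw [← div_le_one (hcard_pos hAC₁), mul_div_assoc] at hC₁
    exact (mul_le_mul_of_nonneg_left (hA₁min C₁ hC₁r hAC₁) hθ.le).trans hC₁
  · obtain rfl | hAC := hAC.eq_or_ssubset
    · simp
    · rw [mul_comm, ← le_div_iff₀ (hcard_pos hAC)]
      exact hA₁min C hCr hAC

/-- The invariant of Nochka's chain `A = A₀ ⊂ A₁ ⊂ ⋯ ⊂ A_k = F`, each `Aᵢ₊₁` a flat of minimal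
rank density among the steep extensions of `Aᵢ`, with `w = rankDensity Aᵢ Aᵢ₊₁` on
`Aᵢ₊₁ \ Aᵢ`. -/
structure IsNochkaChainWeight (A F : Finset ι) (w : ι → ℝ) : Prop where
  subset : A ⊆ F
  rank_le : R.rank F ≤ r
  nochkaConst_le : R.nochkaConst F ≤ R.nochkaConst A
  pos : ∀ j ∈ F \ A, 0 < w j
  nochkaConst_mul_le_one : ∀ j ∈ F \ A, R.nochkaConst F * w j ≤ 1
  sum_eq : ∑ j ∈ F \ A, w j = (R.rank F : ℝ) - R.rank A
  sum_le : ∀ B ⊆ F \ A, ∑ j ∈ B, w j ≤ (R.rank (B ∪ A) : ℝ) - R.rank A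
  not_isSteepExtension : ∀ C, ¬ R.IsSteepExtension F C

theorem isNochkaChainWeight_self {A : Finset ι} (hA : R.rank A ≤ r)
    (h : ∀ C, ¬ R.IsSteepExtension A C) : R.IsNochkaChainWeight A A 0 where
  subset := subset_rfl
  rank_le := hA
  nochkaConst_le := le_rfl
  pos := by simp
  nochkaConst_mul_le_one := by simp
  sum_eq := by simp
  sum_le := fun B hB => by simp [subset_empty.1 (Finset.sdiff_self A ▸ hB)]
  not_isSteepExtension := h

variable {R}

theorem card_sdiff_mul_rankDensity {A A₁ : Finset ι} (h : A ⊂ A₁) :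
    ((A₁ \ A).card : ℝ) * R.rankDensity A A₁ = R.rank A₁ - R.rank A := by
  have : (A.card : ℝ) < A₁.card := by exact_mod_cast card_lt_card h
  rw [card_sdiff_of_subset h.subset, Nat.cast_sub (card_le_card h.subset), rankDensity,
    mul_div_cancel₀ _ (by linarith)]

theorem IsNochkaChainWeight.sum_le_of_extend {A A₁ F : Finset ι} {w : ι → ℝ}
    (hw : R.IsNochkaChainWeight A₁ F w) (hA₁ : R.IsSteepExtension A A₁)
    (hmin : ∀ C, A ⊆ C → R.rank C ≤ r →
      (C.card - A.card) * R.rankDensity A A₁ ≤ R.rank C - R.rank A)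
    {B : Finset ι} (hB : B ⊆ F \ A) :
    ∑ j ∈ B, A₁.piecewise (fun _ => R.rankDensity A A₁) w j ≤
      (R.rank (B ∪ A) : ℝ) - R.rank A := by
  have hAA₁ := hA₁.2.1.subset
  rw [sum_piecewise, sum_const, nsmul_eq_mul]
  have hw_le : ∑ j ∈ B \ A₁, w j ≤ (R.rank (B ∪ A₁) : ℝ) - R.rank A₁ := by
    rw [← sdiff_union_self_eq_union]
    exact hw.sum_le _ (sdiff_subset_sdiff (hB.trans sdiff_subset) subset_rfl)
  have hdens_le : ((B ∩ A₁).card : ℝ) * R.rankDensity A A₁ ≤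
      (R.rank (B ∩ A₁ ∪ A) : ℝ) - R.rank A := by
    have hdisj : Disjoint (B ∩ A₁) A :=
      disjoint_of_subset_left (inter_subset_left.trans hB) sdiff_disjoint
    have := hmin (B ∩ A₁ ∪ A) subset_union_right
      ((R.rank_mono (union_subset inter_subset_right hAA₁)).trans hA₁.1)
    rwa [card_union_of_disjoint hdisj, Nat.cast_add, add_sub_cancel_right] at this
  have hsub : (R.rank (B ∪ A₁) : ℝ) + R.rank (B ∩ A₁ ∪ A) ≤ R.rank (B ∪ A) + R.rank A₁ := by
    exact_mod_cast R.rank_union_add_rank_le_of_subset hAA₁ B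
  linarith

theorem IsNochkaChainWeight.extend {A A₁ F : Finset ι} {w : ι → ℝ}
    (hw : R.IsNochkaChainWeight A₁ F w) (hA : R.IsFlat A) (hA₁ : R.IsSteepExtension A A₁)
    (hmin : ∀ C, A ⊆ C → R.rank C ≤ r →
      (C.card - A.card) * R.rankDensity A A₁ ≤ R.rank C - R.rank A) :
    R.IsNochkaChainWeight A F (A₁.piecewise (fun _ => R.rankDensity A A₁) w) := by
  obtain ⟨hθ_le, hθ_mul⟩ := hA₁.nochkaConst_le_and_mul_le
  have hAA₁ := hA₁.2.1
  have hcard : (A.card : ℝ) < A₁.card := by exact_mod_cast card_lt_card hAA₁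
  have hrank : (R.rank A : ℝ) < R.rank A₁ := by exact_mod_cast hA.rank_lt hAA₁
  have hF_sdiff : ∀ j ∈ F \ A, j ∉ A₁ → j ∈ F \ A₁ := fun j hj hjA₁ =>
    mem_sdiff.2 ⟨(mem_sdiff.1 hj).1, hjA₁⟩
  refine ⟨hAA₁.subset.trans hw.subset, hw.rank_le, hw.nochkaConst_le.trans hθ_le,
    fun j hj => ?_, fun j hj => ?_, ?_, fun B hB => hw.sum_le_of_extend hA₁ hmin hB,
    hw.not_isSteepExtension⟩
  · by_cases hjA₁ : j ∈ A₁
    · rw [piecewise_eq_of_mem _ _ _ hjA₁]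
      exact div_pos (by linarith) (by linarith)
    · rw [piecewise_eq_of_notMem _ _ _ hjA₁]
      exact hw.pos j (hF_sdiff j hj hjA₁)
  · by_cases hjA₁ : j ∈ A₁
    · rw [piecewise_eq_of_mem _ _ _ hjA₁, rankDensity, mul_div_assoc', div_le_one (by linarith)]
      exact (mul_le_mul_of_nonneg_right hw.nochkaConst_le (by linarith)).trans hθ_mul
    · rw [piecewise_eq_of_notMem _ _ _ hjA₁]
      exact hw.nochkaConst_mul_le_one j (hF_sdiff j hj hjA₁)
  · have h₁ : (F \ A) ∩ A₁ = A₁ \ A := by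
      ext j; have := @hw.subset j; simp only [mem_inter, mem_sdiff]; tauto
    have h₂ : (F \ A) \ A₁ = F \ A₁ := by
      ext j; have : j ∈ A → j ∈ A₁ := fun h => hAA₁.subset h; simp only [mem_sdiff]; tauto
    rw [sum_piecewise, h₁, h₂, hw.sum_eq, sum_const, nsmul_eq_mul,
      card_sdiff_mul_rankDensity hAA₁]
    ring

variable (R)

theorem exists_isNochkaChainWeight [Fintype ι] (hrn : r ≤ n) {A : Finset ι} (hA : R.IsFlat A)
    (hAr : R.rank A ≤ r) : ∃ F w, R.IsNochkaChainWeight A F w := by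
  by_cases h : ∃ C, R.IsSteepExtension A C
  · obtain ⟨A₁, hA₁flat, hA₁, hmin⟩ := R.exists_isFlat_isSteepExtension_minimal hrn h
    obtain ⟨F, w, hw⟩ := exists_isNochkaChainWeight hrn hA₁flat hA₁.1
    exact ⟨F, _, hw.extend hA hA₁ hmin⟩
  · exact ⟨A, 0, R.isNochkaChainWeight_self hAr (not_exists.1 h)⟩
termination_by Fintype.card ι - A.card
decreasing_by
  have := card_lt_card hA₁.2.1
  have := card_le_univ A₁
  omega

theorem nochkaConst_empty : R.nochkaConst ∅ = (2 * n - r + 1) / (r + 1) := by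
  simp [nochkaConst, R.rank_empty]

theorem card_sdiff_lt_nochkaConst_mul (hrn : r ≤ n) {F B : Finset ι} (hBF : ¬ B ⊆ F)
    (hFB : R.rank (F ∪ B) ≤ r) (hF : ∀ C, ¬ R.IsSteepExtension F C) :
    ((B \ F).card : ℝ) < R.nochkaConst F * (R.rank B - R.rank (B ∩ F)) := by
  have hFFB : F ⊂ F ∪ B := Finset.ssubset_iff_subset_ne.2
    ⟨subset_union_left, fun h => hBF (h ▸ subset_union_right)⟩
  have hsteep : ¬ _ := fun h => hF (F ∪ B) ⟨hFB, hFFB, h⟩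
  have hcard : ((F ∪ B).card : ℝ) = (B \ F).card + F.card := by
    rw [union_comm, ← card_sdiff_add_card, Nat.cast_add]
  have hsub : (R.rank (F ∪ B) : ℝ) + R.rank (B ∩ F) ≤ R.rank F + R.rank B := by
    rw [inter_comm]
    exact_mod_cast R.rank_union_add_rank_inter_le F B
  have hθ := R.nochkaConst_pos hrn ((R.rank_mono subset_union_left).trans hFB)
  rw [not_le, hcard, add_sub_cancel_right] at hsteep
  exact hsteep.trans_le (mul_le_mul_of_nonneg_left (by linarith) hθ.le)

theorem card_sdiff_le_nochkaConst_mul_of_rank_eq [Fintype ι] (hrn : r ≤ n)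
    (hι : n + 1 ≤ Fintype.card ι) {F B : Finset ι} (hF : R.rank F ≤ r)
    (hFB : R.rank (F ∪ B) = r + 1) (hB : B.card ≤ n + 1) :
    ((B \ F).card : ℝ) ≤ R.nochkaConst F * (R.rank B - R.rank (B ∩ F)) := by
  have hsub : (R.rank (F ∪ B) : ℝ) + R.rank (B ∩ F) ≤ R.rank F + R.rank B := by
    rw [inter_comm]
    exact_mod_cast R.rank_union_add_rank_inter_le F B
  have hBlow : (B.card : ℝ) + r ≤ R.rank B + n := by
    exact_mod_cast R.card_add_le_rank_add hι hB
  have hBF : (R.rank (B ∩ F) : ℝ) ≤ (B ∩ F).card := by exact_mod_cast R.rank_le_card _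
  have hcard : ((B \ F).card : ℝ) + (B ∩ F).card = B.card := by
    exact_mod_cast card_sdiff_add_card_inter B F
  have hθ := R.sub_rank_le_nochkaConst_mul_corank hι hF
  rw [hFB, Nat.cast_add, Nat.cast_one] at hsub
  refine le_mul_of_sub_le_of_le (R.corank_pos hF) (m := n - r)
    (sub_nonneg.2 (by exact_mod_cast hrn)) (by linarith) (by linarith) (by linarith)

theorem card_sdiff_le_nochkaConst_mul [Fintype ι] (hrn : r ≤ n) (hι : n + 1 ≤ Fintype.card ι)
    {F B : Finset ι} (hF : R.rank F ≤ r) (hFterm : ∀ C, ¬ R.IsSteepExtension F C)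
    (hB : B.card ≤ n + 1) :
    ((B \ F).card : ℝ) ≤ R.nochkaConst F * (R.rank B - R.rank (B ∩ F)) := by
  by_cases hBF : B ⊆ F
  · rw [sdiff_eq_empty_iff_subset.2 hBF, card_empty, Nat.cast_zero]
    refine mul_nonneg (R.nochkaConst_pos hrn hF).le (sub_nonneg.2 ?_)
    exact_mod_cast R.rank_mono inter_subset_left
  · rcases (R.rank_le (F ∪ B)).lt_or_eq with hFB | hFB
    · exact (R.card_sdiff_lt_nochkaConst_mul hrn hBF (Nat.lt_succ_iff.1 hFB) hFterm).le
    · exact R.card_sdiff_le_nochkaConst_mul_of_rank_eq hrn hι hF hFB hB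

theorem div_le_nochkaConst [Fintype ι] (hrn : r ≤ n) (hι : n + 1 ≤ Fintype.card ι)
    {F : Finset ι} (hF : R.rank F ≤ r) : ((n : ℝ) + 1) / (r + 1) ≤ R.nochkaConst F := by
  have hθ := R.sub_rank_le_nochkaConst_mul_corank hι hF
  have ht := R.corank_pos hF
  have hrn' : (r : ℝ) ≤ n := by exact_mod_cast hrn
  have hd : (0 : ℝ) ≤ R.rank F := Nat.cast_nonneg _
  rw [div_le_iff₀ (by positivity)]
  nlinarith

theorem one_le_nochkaConst [Fintype ι] (hrn : r ≤ n) (hι : n + 1 ≤ Fintype.card ι)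
    {F : Finset ι} (hF : R.rank F ≤ r) : 1 ≤ R.nochkaConst F := by
  refine le_trans ?_ (R.div_le_nochkaConst hrn hι hF)
  rw [one_le_div (by positivity)]
  exact_mod_cast Nat.succ_le_succ hrn

noncomputable def nochkaWeight (F : Finset ι) (w : ι → ℝ) : ι → ℝ :=
  F.piecewise w fun _ => (R.nochkaConst F)⁻¹

variable {R}

theorem IsNochkaChainWeight.nochkaWeight_pos {F : Finset ι} {w : ι → ℝ}
    (hw : R.IsNochkaChainWeight ∅ F w) (hθ : 0 < R.nochkaConst F) (j : ι) :
    0 < R.nochkaWeight F w j := by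
  by_cases hj : j ∈ F
  · rw [nochkaWeight, piecewise_eq_of_mem _ _ _ hj]
    exact hw.pos j (by simpa using hj)
  · rw [nochkaWeight, piecewise_eq_of_notMem _ _ _ hj]
    exact inv_pos.2 hθ

theorem IsNochkaChainWeight.nochkaWeight_mul_le_one {F : Finset ι} {w : ι → ℝ}
    (hw : R.IsNochkaChainWeight ∅ F w) (hθ : 0 < R.nochkaConst F) (j : ι) :
    R.nochkaWeight F w j * R.nochkaConst F ≤ 1 := by
  by_cases hj : j ∈ F
  · rw [nochkaWeight, piecewise_eq_of_mem _ _ _ hj, mul_comm]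
    exact hw.nochkaConst_mul_le_one j (by simpa using hj)
  · rw [nochkaWeight, piecewise_eq_of_notMem _ _ _ hj, inv_mul_cancel₀ hθ.ne']

theorem IsNochkaChainWeight.sum_nochkaWeight_le [Fintype ι] (hrn : r ≤ n)
    (hι : n + 1 ≤ Fintype.card ι) {F : Finset ι} {w : ι → ℝ}
    (hw : R.IsNochkaChainWeight ∅ F w) {B : Finset ι} (hB : B.card ≤ n + 1) :
    ∑ j ∈ B, R.nochkaWeight F w j ≤ R.rank B := by
  have hθ := R.nochkaConst_pos hrn hw.rank_le
  have hinter := hw.sum_le (B ∩ F) (by simp)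
  have htail := R.card_sdiff_le_nochkaConst_mul hrn hι hw.rank_le hw.not_isSteepExtension hB
  rw [union_empty, R.rank_empty, Nat.cast_zero, sub_zero] at hinter
  rw [nochkaWeight, sum_piecewise, sum_const, nsmul_eq_mul, ← div_eq_mul_inv]
  linarith [(div_le_iff₀' hθ).2 htail]

theorem IsNochkaChainWeight.nochkaConst_mul_sum_nochkaWeight [Fintype ι] {F : Finset ι}
    {w : ι → ℝ} (hw : R.IsNochkaChainWeight ∅ F w) (hθ₀ : R.nochkaConst F ≠ 0) :
    (Fintype.card ι : ℝ) - 2 * n + r - 1 =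
      R.nochkaConst F * ((∑ j, R.nochkaWeight F w j) - r - 1) := by
  have hθ := R.nochkaConst_mul_corank hw.rank_le
  have hsum := hw.sum_eq
  rw [sdiff_empty, R.rank_empty, Nat.cast_zero, sub_zero] at hsum
  rw [nochkaWeight, sum_piecewise, univ_inter, hsum, sum_const, nsmul_eq_mul,
    ← compl_eq_univ_sdiff, card_compl, Nat.cast_sub (card_le_univ F)]
  field_simp
  linear_combination hθ

variable (R)

theorem exists_nochka_weights [Fintype ι] (hrn : r ≤ n) (hι : n + 1 ≤ Fintype.card ι) :
    ∃ (ω : ι → ℝ) (θ : ℝ),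
      (∀ j, 0 < ω j ∧ ω j ≤ 1) ∧ 1 ≤ θ ∧ (∀ j, ω j * θ ≤ 1) ∧
      ((Fintype.card ι : ℝ) - 2 * n + r - 1 = θ * ((∑ j, ω j) - r - 1)) ∧
      (∀ B : Finset ι, B.card ≤ n + 1 → ∑ j ∈ B, ω j ≤ R.rank B) ∧
      (((n : ℝ) + 1) / (r + 1) ≤ θ ∧ θ ≤ (2 * (n : ℝ) - r + 1) / (r + 1)) := by
  obtain ⟨F, w, hw⟩ := R.exists_isNochkaChainWeight hrn R.isFlat_empty (by simp [R.rank_empty])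
  have hθ1 := R.one_le_nochkaConst hrn hι hw.rank_le
  have hθ : 0 < R.nochkaConst F := one_pos.trans_le hθ1
  have hωθ := hw.nochkaWeight_mul_le_one hθ
  refine ⟨R.nochkaWeight F w, R.nochkaConst F, fun j => ⟨hw.nochkaWeight_pos hθ j, ?_⟩, hθ1,
    hωθ, hw.nochkaConst_mul_sum_nochkaWeight hθ.ne', fun B hB => hw.sum_nochkaWeight_le hrn hι hB,
    R.div_le_nochkaConst hrn hι hw.rank_le, hw.nochkaConst_le.trans_eq R.nochkaConst_empty⟩
  exact (le_mul_of_one_le_right (hw.nochkaWeight_pos hθ j).le hθ1).trans (hωθ j)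

end SubgeneralRankFunction

section Linear

open Module Submodule

variable {ι : Type*} [DecidableEq ι] (K : Type*) {V : Type*} [Field K] [AddCommGroup V]
  [Module K V] [FiniteDimensional K V]

noncomputable def RankFunction.ofLinear (L : ι → V) (hL : ∀ j, L j ≠ 0) : RankFunction ι where
  rank B := finrank K (span K (L '' B))
  rank_mono _ _ h := finrank_mono (span_mono (Set.image_mono (coe_subset.2 h)))
  rank_union_add_rank_inter_le A B := by
    have hinter : span K (L '' ↑(A ∩ B)) ≤ span K (L '' A) ⊓ span K (L '' B) :=
      le_inf (span_mono (Set.image_mono (coe_subset.2 inter_subset_left)))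
        (span_mono (Set.image_mono (coe_subset.2 inter_subset_right)))
    have := finrank_sup_add_finrank_inf_eq (span K (L '' A)) (span K (L '' B))
    have := finrank_mono hinter
    rw [coe_union, Set.image_union, span_union]
    omega
  rank_empty := by simp
  rank_singleton j := by
    rw [coe_singleton, Set.image_singleton, finrank_span_singleton (hL j)]

noncomputable def SubgeneralRankFunction.ofLinear {n r : ℕ} (hV : finrank K V = r + 1)
    (L : ι → V) (hL : ∀ j, L j ≠ 0)
    (hpos : ∀ B : Finset ι, B.card = n + 1 → span K (L '' B) = ⊤) :
    SubgeneralRankFunction ι n r where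
  toRankFunction := RankFunction.ofLinear K L hL
  rank_le _ := hV ▸ finrank_le _
  rank_eq_of_card_eq B hB := by
    rw [← hV, ← finrank_top K V, ← hpos B hB]
    rfl

end Linear

theorem linearIndependent_of_card_eq_finrank_span {ι K V : Type*} [Field K] [AddCommGroup V]
    [Module K V] {L : ι → V} {M : Finset ι}
    (h : M.card = Module.finrank K (Submodule.span K (L '' M))) :
    LinearIndependent K (fun j : (M : Set ι) => L j) := by
  rw [linearIndependent_iff_card_eq_finrank_span, ← Set.image_eq_range, Set.finrank]
  simpa using h

theorem prod_rpow_le_prod_of_sum_mul_log_le {ι : Type*} {Y M : Finset ι} {lam ω : ι → ℝ}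
    (hlam : ∀ j, 0 < lam j) (h : ∑ j ∈ Y, ω j * Real.log (lam j) ≤ ∑ j ∈ M, Real.log (lam j)) :
    ∏ j ∈ Y, lam j ^ ω j ≤ ∏ j ∈ M, lam j := by
  rw [← Real.log_le_log_iff (prod_pos fun j _ => Real.rpow_pos_of_pos (hlam j) _)
    (prod_pos fun j _ => hlam j), Real.log_prod (fun j _ => (Real.rpow_pos_of_pos (hlam j) _).ne'),
    Real.log_prod (fun j _ => (hlam j).ne')]
  simpa only [Real.log_rpow (hlam _)] using h

theorem stmt_5_general (r n q : ℕ) (hrn : r ≤ n) (hq : 2 * n - r + 1 ≤ q)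
    (L : Fin q → Module.Dual ℂ (Fin (r + 1) → ℂ))
    (hL0 : ∀ j, L j ≠ 0)
    (hpos : ∀ B : Finset (Fin q), B.card = n + 1 →
      Submodule.span ℂ (L '' (B : Set (Fin q))) = ⊤) :
    ∃ (ω : Fin q → ℝ) (θ : ℝ),
      (∀ j, 0 < ω j ∧ ω j ≤ 1) ∧ 1 ≤ θ ∧
      (∀ j, ω j * θ ≤ 1) ∧
      ((q : ℝ) - 2 * n + r - 1 = θ * ((∑ j, ω j) - r - 1)) ∧
      (∀ B : Finset (Fin q), B.Nonempty → B.card ≤ n + 1 →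
        ∑ j ∈ B, ω j ≤
          (Module.finrank ℂ (Submodule.span ℂ (L '' (B : Set (Fin q)))) : ℝ)) ∧
      (((n : ℝ) + 1) / (r + 1) ≤ θ ∧ θ ≤ (2 * (n : ℝ) - r + 1) / (r + 1)) ∧
      (∀ lam : Fin q → ℝ, (∀ j, 1 ≤ lam j) →
        ∀ Y : Finset (Fin q), 0 < Y.card → Y.card ≤ n + 1 →
          ∃ M : Finset (Fin q), M ⊆ Y ∧
            M.card = Module.finrank ℂ (Submodule.span ℂ (L '' (Y : Set (Fin q)))) ∧
            LinearIndependent ℂ (fun j : (M : Set (Fin q)) => L j) ∧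
            Submodule.span ℂ (L '' (M : Set (Fin q))) =
              Submodule.span ℂ (L '' (Y : Set (Fin q))) ∧
            ∏ j ∈ Y, lam j ^ ω j ≤ ∏ j ∈ M, lam j) := by
  let R : SubgeneralRankFunction (Fin q) n r :=
    .ofLinear ℂ (by simp [Subspace.dual_finrank_eq]) L hL0 hpos
  obtain ⟨ω, θ, hω, hθ1, hωθ, hsum, hωB, hθ⟩ :=
    R.exists_nochka_weights hrn (by rw [Fintype.card_fin]; omega)
  refine ⟨ω, θ, hω, hθ1, hωθ, by simpa using hsum, fun B _ hB => hωB B hB, hθ, ?_⟩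
  intro lam hlam Y _ hY
  obtain ⟨M, hMY, hMcard, hMrank, hMsum⟩ := R.exists_subset_sum_mul_le ω Y
    (fun j => Real.log (lam j)) (fun j _ => Real.log_nonneg (hlam j))
    (fun B hBY => hωB B ((card_le_card hBY).trans hY))
  have hspan := Submodule.span_mono (R := ℂ) (Set.image_mono (f := L) (coe_subset.2 hMY))
  exact ⟨M, hMY, hMcard, linearIndependent_of_card_eq_finrank_span (hMcard.trans hMrank.symm),
    Submodule.eq_of_le_of_finrank_eq hspan hMrank,
    prod_rpow_le_prod_of_sum_mul_log_le (fun j => one_pos.trans_le (hlam j)) hMsum⟩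

/-- Nochka's theorem (Theorem 5.7 of the paper): existence of Nochka weights and
a Nochka constant for nonzero linear forms on ℂ^{r+1} in n-subgeneral position. -/
theorem stmt_5 (r n q : ℕ) (hr : 1 ≤ r) (hrn : r ≤ n) (hq : 2 * n - r + 1 ≤ q)
    (L : Fin q → Module.Dual ℂ (Fin (r + 1) → ℂ))
    (hL0 : ∀ j, L j ≠ 0)
    (hpos : ∀ B : Finset (Fin q), B.card = n + 1 →
      Submodule.span ℂ (L '' (B : Set (Fin q))) = ⊤) :
    ∃ (ω : Fin q → ℝ) (θ : ℝ),
      (∀ j, 0 < ω j ∧ ω j ≤ 1) ∧ 1 ≤ θ ∧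
      (∀ j, ω j * θ ≤ 1) ∧
      ((q : ℝ) - 2 * n + r - 1 = θ * ((∑ j, ω j) - r - 1)) ∧
      (∀ B : Finset (Fin q), B.Nonempty → B.card ≤ n + 1 →
        ∑ j ∈ B, ω j ≤
          (Module.finrank ℂ (Submodule.span ℂ (L '' (B : Set (Fin q)))) : ℝ)) ∧
      (((n : ℝ) + 1) / (r + 1) ≤ θ ∧ θ ≤ (2 * (n : ℝ) - r + 1) / (r + 1)) ∧
      (∀ lam : Fin q → ℝ, (∀ j, 1 ≤ lam j) →
        ∀ Y : Finset (Fin q), 0 < Y.card → Y.card ≤ n + 1 →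
          ∃ M : Finset (Fin q), M ⊆ Y ∧
            M.card = Module.finrank ℂ (Submodule.span ℂ (L '' (Y : Set (Fin q)))) ∧
            LinearIndependent ℂ (fun j : (M : Set (Fin q)) => L j) ∧
            Submodule.span ℂ (L '' (M : Set (Fin q))) =
              Submodule.span ℂ (L '' (Y : Set (Fin q))) ∧
            ∏ j ∈ Y, lam j ^ ω j ≤ ∏ j ∈ M, lam j) :=
  stmt_5_general r n q hrn hq L hL0 hpos
end

section
/- Local Enneper–Weierstrass construction yields conformal immersions: Let U ⊆ ℂ be a nonempty convex open set, n ≥ 2, and let F₁, …, F_n : U → ℂ be holomorphic functions whose derivatives satisfy Σ_{i=1}^{n} (F_i′(z))² = 0 for all z ∈ U. Define x : U → ℝⁿ by x_i(z) = Re F_i(z), and for z = u + iv write x_u(z), x_v(z) ∈ ℝⁿ for the partial derivatives of x in the directions 1 and i respectively. Then for every z ∈ U: ⟨x_u(z), x_u(z)⟩ = ⟨x_v(z), x_v(z)⟩ = (1/2)·Σ_{i=1}^{n} |F_i′(z)|² and ⟨x_u(z), x_v(z)⟩ = 0. If in addition the F_i′ have no common zero on U, then the real Fréchet derivative of x at every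 z ∈ U is injective; i.e., x is a conformal immersion with induced metric ds² = (1/2)(Σ|F_i′|²)|dz|². -/
open ComplexConjugate

/-!
The real derivative of `Re F_i` at `z` is `w ↦ Re (w F_i'(z))`. For `a ∈ ℂⁿ` with `Σ a_i² = 0`,
the identity `Re u Re v = (Re (u v̄) + Re (u v)) / 2` gives
`Σ Re (w a_i) Re (w' a_i) = Re (w w̄') Σ |a_i|² / 2`: the pulled-back Euclidean metric is
`Σ |a_i|² / 2` times the standard one on `ℂ`, hence positive definite as soon as `a ≠ 0`.
-/

theorem fderiv_re_apply {f : ℂ → ℂ} {z : ℂ} (hf : DifferentiableAt ℂ f z) (w : ℂ) :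
    fderiv ℝ (fun z => (f z).re) z w = (w * deriv f z).re := by
  have h : HasFDerivAt (fun z => (f z).re)
      (Complex.reCLM.comp ((fderiv ℂ f z).restrictScalars ℝ)) z :=
    Complex.reCLM.hasFDerivAt.comp z (hf.hasFDerivAt.restrictScalars ℝ)
  rw [h.fderiv]
  simp only [ContinuousLinearMap.comp_apply, ContinuousLinearMap.coe_restrictScalars']
  rw [fderiv_eq_smul_deriv, smul_eq_mul, Complex.reCLM_apply]

theorem fderiv_pi_re_apply {ι : Type*} [Fintype ι] {F : ι → ℂ → ℂ} {z : ℂ}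
    (hF : ∀ i, DifferentiableAt ℂ (F i) z) (w : ℂ) (i : ι) :
    fderiv ℝ (fun z i => (F i z).re) z w i = (w * deriv (F i) z).re := by
  have hre : ∀ i, DifferentiableAt ℝ (fun z => (F i z).re) z := fun i =>
    Complex.reCLM.differentiableAt.comp z ((hF i).restrictScalars ℝ)
  rw [fderiv_pi hre, ContinuousLinearMap.pi_apply]
  exact fderiv_re_apply (hF i) w

theorem Complex.re_mul_re (u v : ℂ) : u.re * v.re = ((u * conj v).re + (u * v).re) / 2 := by
  simp only [mul_re, conj_re, conj_im]; ring

theorem sum_re_mul_re_of_sum_sq_eq_zero {ι : Type*} [Fintype ι] {a : ι → ℂ}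
    (ha : ∑ i, a i ^ 2 = 0) (w w' : ℂ) :
    ∑ i, (w * a i).re * (w' * a i).re = (w * conj w').re * (∑ i, ‖a i‖ ^ 2) / 2 := by
  have hherm : ∑ i, w * a i * conj (w' * a i) = w * conj w' * ↑(∑ i, ‖a i‖ ^ 2) := by
    push_cast
    rw [Finset.mul_sum]
    refine Finset.sum_congr rfl fun i _ => ?_
    rw [map_mul, ← Complex.mul_conj']
    ring
  have hsym : ∑ i, w * a i * (w' * a i) = 0 := by
    rw [← mul_zero (w * w'), ← ha, Finset.mul_sum]
    exact Finset.sum_congr rfl fun i _ => by ring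
  simp_rw [Complex.re_mul_re, ← Finset.sum_div, Finset.sum_add_distrib, ← Complex.re_sum,
    hherm, hsym, Complex.re_mul_ofReal, Complex.zero_re, add_zero]

theorem sum_sq_norm_pos_of_ne_zero {ι : Type*} [Fintype ι] {a : ι → ℂ} {j : ι} (hj : a j ≠ 0) :
    0 < ∑ i, ‖a i‖ ^ 2 :=
  Finset.sum_pos' (fun i _ => by positivity) ⟨j, Finset.mem_univ j, by positivity⟩

theorem ContinuousLinearMap.injective_of_sum_sq_apply {E ι : Type*} [NormedAddCommGroup E]
    [NormedSpace ℝ E] [Fintype ι] (L : E →L[ℝ] (ι → ℝ)) {c : ℝ} (hc : 0 < c)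
    (hL : ∀ w, ∑ i, L w i ^ 2 = c * ‖w‖ ^ 2) : Function.Injective L := by
  refine (injective_iff_map_eq_zero L).2 fun w hw => ?_
  have : c * ‖w‖ ^ 2 = 0 := by simp [← hL w, hw]
  simpa [hc.ne'] using this

theorem stmt_14_general (U : Set ℂ) (hU : IsOpen U) (n : ℕ) (F : Fin n → ℂ → ℂ)
    (hF : ∀ i, DifferentiableOn ℂ (F i) U)
    (hiso : ∀ z ∈ U, ∑ i, (deriv (F i) z) ^ 2 = 0)
    (x : ℂ → Fin n → ℝ) (hx : ∀ z i, x z i = (F i z).re) :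
    (∀ z ∈ U,
        (∑ i, (fderiv ℝ x z 1 i) ^ 2
            = (1 / 2) * ∑ i, ‖deriv (F i) z‖ ^ 2) ∧
        (∑ i, (fderiv ℝ x z Complex.I i) ^ 2
            = (1 / 2) * ∑ i, ‖deriv (F i) z‖ ^ 2) ∧
        (∑ i, (fderiv ℝ x z 1 i) * (fderiv ℝ x z Complex.I i) = 0)) ∧
    ((∀ z ∈ U, ∃ i, deriv (F i) z ≠ 0) →
      ∀ z ∈ U, Function.Injective (fderiv ℝ x z)) := by
  have hxF : x = fun z i => (F i z).re := funext₂ hx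
  have hconf : ∀ z ∈ U, ∀ w w' : ℂ, ∑ i, fderiv ℝ x z w i * fderiv ℝ x z w' i
      = (w * conj w').re * (∑ i, ‖deriv (F i) z‖ ^ 2) / 2 := fun z hz w w' => by
    simp only [hxF, fderiv_pi_re_apply (fun i => (hF i).differentiableAt (hU.mem_nhds hz))]
    exact sum_re_mul_re_of_sum_sq_eq_zero (hiso z hz) w w'
  refine ⟨fun z hz => ⟨?_, ?_, ?_⟩, fun hnc z hz => ?_⟩
  · simpa [sq, div_eq_inv_mul] using hconf z hz 1 1
  · simpa [sq, div_eq_inv_mul] using hconf z hz Complex.I Complex.I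
  · simpa using hconf z hz 1 Complex.I
  · obtain ⟨j, hj⟩ := hnc z hz
    refine (fderiv ℝ x z).injective_of_sum_sq_apply
      (half_pos (sum_sq_norm_pos_of_ne_zero (a := fun i => deriv (F i) z) hj)) fun w => ?_
    simp_rw [sq (fderiv ℝ x z w _)]
    have hw : (w * conj w).re = ‖w‖ ^ 2 := by rw [Complex.mul_conj']; norm_cast
    rw [hconf z hz w w, hw]
    ring

/-- Local Enneper–Weierstrass construction yields conformal immersions (local
form of Theorem 2.14 of the paper): if F₁,…,F_n are holomorphic on a convex open
set U ⊆ ℂ with Σ (F_i′)² = 0, then x = (Re F₁,…,Re F_n) : U → ℝⁿ satisfies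
⟨x_u,x_u⟩ = ⟨x_v,x_v⟩ = (1/2)Σ|F_i′|², ⟨x_u,x_v⟩ = 0, and if the F_i′ have no
common zero then the real Fréchet derivative of x is everywhere injective. -/
theorem stmt_14 (U : Set ℂ) (hU : IsOpen U) (hUconv : Convex ℝ U)
    (hUne : U.Nonempty) (n : ℕ) (hn : 2 ≤ n) (F : Fin n → ℂ → ℂ)
    (hF : ∀ i, DifferentiableOn ℂ (F i) U)
    (hiso : ∀ z ∈ U, ∑ i, (deriv (F i) z) ^ 2 = 0)
    (x : ℂ → Fin n → ℝ) (hx : ∀ z i, x z i = (F i z).re) :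
    (∀ z ∈ U,
        (∑ i, (fderiv ℝ x z 1 i) ^ 2
            = (1 / 2) * ∑ i, ‖deriv (F i) z‖ ^ 2) ∧
        (∑ i, (fderiv ℝ x z Complex.I i) ^ 2
            = (1 / 2) * ∑ i, ‖deriv (F i) z‖ ^ 2) ∧
        (∑ i, (fderiv ℝ x z 1 i) * (fderiv ℝ x z Complex.I i) = 0)) ∧
    ((∀ z ∈ U, ∃ i, deriv (F i) z ≠ 0) →
      ∀ z ∈ U, Function.Injective (fderiv ℝ x z)) :=
  stmt_14_general U hU n F hF hiso x hx
end

section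
/- Holomorphic Gauss map implies harmonicity (local form): Let U ⊆ ℂ be an open set and let x₁, …, x_n : U → ℝ be twice continuously differentiable functions. For z = u + iv define f_i(z) = ∂x_i/∂u (z) − i·∂x_i/∂v (z). Assume that Σ_{i=1}^{n} f_i(z)² = 0 for all z ∈ U, that f_n(z) ≠ 0 for all z ∈ U, and that each quotient f_i/f_n is holomorphic on U. Then every x_i is harmonic on U, i.e., ∂²x_i/∂u² + ∂²x_i/∂v² = 0 on U. -/
/-!
Write `f = ∂_u X − i ∂_v X` and `∂̄ = ∂_u + i ∂_v`. For a real `C²` function `X`, symmetry of the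
second derivative gives `∂̄ f = Δ X`, and `∂̄` lets holomorphic factors through, so `f_j = g_j f_n`
with `g_j` holomorphic gives `Δ x_j = g_j Δ x_n = f_j · (Δ x_n / f_n)`. The real vector `(Δ x_j)_j`
is therefore a complex multiple of `(f_j)_j`, and `Σ f_j² = 0` forces `Σ (Δ x_j)² = 0`.
-/

open Complex Filter Topology

noncomputable section

theorem fderiv_fderiv_apply_const {E F : Type*} [NormedAddCommGroup E] [NormedSpace ℝ E]
    [NormedAddCommGroup F] [NormedSpace ℝ F] {X : E → F} {z : E}
    (h : DifferentiableAt ℝ (fderiv ℝ X) z) (u v : E) :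
    fderiv ℝ (fun w => fderiv ℝ X w v) z u = fderiv ℝ (fderiv ℝ X) z u v := by
  rw [fderiv_clm_apply h (differentiableAt_const v)]
  simp

namespace Wirtinger

/-- Twice the Wirtinger derivative `∂X/∂z` of a real function. -/
def dz (X : ℂ → ℝ) (w : ℂ) : ℂ :=
  (fderiv ℝ X w 1 : ℂ) - I * (fderiv ℝ X w I : ℂ)

/-- Twice the Wirtinger derivative `∂F/∂z̄`. -/
def dzbar (F : ℂ → ℂ) (w : ℂ) : ℂ :=
  fderiv ℝ F w 1 + I * fderiv ℝ F w I

def laplacian (X : ℂ → ℝ) (w : ℂ) : ℝ :=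
  fderiv ℝ (fun w => fderiv ℝ X w 1) w 1 + fderiv ℝ (fun w => fderiv ℝ X w I) w I

variable {X : ℂ → ℝ} {F g : ℂ → ℂ} {z : ℂ}

theorem hasFDerivAt_dz (hX : ContDiffAt ℝ 2 X z) :
    HasFDerivAt (dz X)
      (ofRealCLM.comp ((ContinuousLinearMap.apply ℝ ℝ (1 : ℂ)).comp (fderiv ℝ (fderiv ℝ X) z))
        - I • ofRealCLM.comp ((ContinuousLinearMap.apply ℝ ℝ I).comp
            (fderiv ℝ (fderiv ℝ X) z))) z := by
  have hB : HasFDerivAt (fderiv ℝ X) (fderiv ℝ (fderiv ℝ X) z) z :=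
    ((hX.fderiv_right le_rfl).differentiableAt one_ne_zero).hasFDerivAt
  have happ (v : ℂ) := ofRealCLM.hasFDerivAt.comp z
    ((ContinuousLinearMap.apply ℝ ℝ v).hasFDerivAt.comp z hB)
  exact (happ 1).sub ((happ I).const_mul I)

theorem dzbar_dz (hX : ContDiffAt ℝ 2 X z) : dzbar (dz X) z = laplacian X z := by
  have hB : DifferentiableAt ℝ (fderiv ℝ X) z :=
    (hX.fderiv_right le_rfl).differentiableAt one_ne_zero
  have hsymm := hX.isSymmSndFDerivAt (by simp) 1 I
  rw [dzbar, laplacian, (hasFDerivAt_dz hX).fderiv, fderiv_fderiv_apply_const hB,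
    fderiv_fderiv_apply_const hB]
  simp only [sub_apply, smul_apply, ContinuousLinearMap.comp_apply,
    ContinuousLinearMap.apply_apply, ofRealCLM_apply, smul_eq_mul, hsymm]
  push_cast
  linear_combination (-(fderiv ℝ (fderiv ℝ X) z I I : ℂ)) * I_sq

theorem dzbar_eq_zero (hg : DifferentiableAt ℂ g z) : dzbar g z = 0 := by
  have hI : fderiv ℂ g z I = I * fderiv ℂ g z 1 := by simp
  rw [dzbar, hg.fderiv_restrictScalars ℝ]
  simp only [ContinuousLinearMap.coe_restrictScalars', hI]
  linear_combination fderiv ℂ g z 1 * I_sq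

theorem dzbar_mul (hg : DifferentiableAt ℂ g z) (hF : DifferentiableAt ℝ F z) :
    dzbar (g * F) z = g z * dzbar F z := by
  have hCR := dzbar_eq_zero hg
  simp only [dzbar] at hCR ⊢
  rw [fderiv_mul (hg.restrictScalars ℝ) hF]
  simp only [add_apply, smul_apply, smul_eq_mul]
  linear_combination F z * hCR

theorem laplacian_eq_div_mul {Y : ℂ → ℝ} (hX : ContDiffAt ℝ 2 X z) (hY : ContDiffAt ℝ 2 Y z)
    (hY0 : ∀ᶠ w in 𝓝 z, dz Y w ≠ 0) (hg : DifferentiableAt ℂ (fun w => dz X w / dz Y w) z) :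
    (laplacian X z : ℂ) = dz X z / dz Y z * laplacian Y z := by
  have hXY : dz X =ᶠ[𝓝 z] (fun w => dz X w / dz Y w) * dz Y := by
    filter_upwards [hY0] with w hw using (div_mul_cancel₀ _ hw).symm
  rw [← dzbar_dz hX, ← dzbar_dz hY, ← dzbar_mul hg (hasFDerivAt_dz hY).differentiableAt, dzbar,
    dzbar, hXY.fderiv_eq]

end Wirtinger

theorem eq_zero_of_sum_sq_eq_zero_of_ofReal_eq_mul {ι : Type*} [Fintype ι] {a : ι → ℝ}
    {c : ι → ℂ} {w : ℂ} (hc : ∑ j, c j ^ 2 = 0) (ha : ∀ j, (a j : ℂ) = c j * w) (j : ι) :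
    a j = 0 := by
  have hsum : ∑ j, a j ^ 2 = 0 := by
    have : ((∑ j, a j ^ 2 : ℝ) : ℂ) = 0 := by
      push_cast
      simp_rw [ha, mul_pow, ← Finset.sum_mul, hc, zero_mul]
    exact_mod_cast this
  exact pow_eq_zero_iff two_ne_zero |>.1 <|
    (Finset.sum_eq_zero_iff_of_nonneg fun j _ => sq_nonneg (a j)).1 hsum j (Finset.mem_univ j)

open Wirtinger

/-- Holomorphic Gauss map implies harmonicity (local form of the converse
direction of Theorem 2.13 of the paper): if x₁,…,x_n : U → ℝ are C²,
f_i = ∂x_i/∂u − i·∂x_i/∂v satisfy Σ f_i² = 0, f_n is nowhere zero on U and each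
f_i/f_n is holomorphic on U, then every x_i is harmonic on U. -/
theorem stmt_15 (U : Set ℂ) (hU : IsOpen U) (n : ℕ) (hn : 1 ≤ n)
    (x : Fin n → ℂ → ℝ) (hx : ∀ i, ContDiffOn ℝ 2 (x i) U)
    (f : Fin n → ℂ → ℂ)
    (hf : ∀ i z, f i z
      = ((fderiv ℝ (x i) z 1 : ℝ) : ℂ)
        - Complex.I * ((fderiv ℝ (x i) z Complex.I : ℝ) : ℂ))
    (hiso : ∀ z ∈ U, ∑ i, (f i z) ^ 2 = 0)
    (hlast : ∀ z ∈ U, f ⟨n - 1, by omega⟩ z ≠ 0)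
    (hquot : ∀ i, DifferentiableOn ℂ (fun z => f i z / f ⟨n - 1, by omega⟩ z) U) :
    ∀ i, ∀ z ∈ U,
      fderiv ℝ (fun w => fderiv ℝ (x i) w 1) z 1
        + fderiv ℝ (fun w => fderiv ℝ (x i) w Complex.I) z Complex.I = 0 := by
  obtain rfl : f = fun j => dz (x j) := funext fun j => funext (hf j)
  intro i z hz
  set N : Fin n := ⟨n - 1, by omega⟩
  have hC2 (j : Fin n) : ContDiffAt ℝ 2 (x j) z := (hx j).contDiffAt (hU.mem_nhds hz)
  have hΔ (j : Fin n) :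
      (laplacian (x j) z : ℂ) = dz (x j) z * (laplacian (x N) z / dz (x N) z) := by
    rw [laplacian_eq_div_mul (hC2 j) (hC2 N) (eventually_of_mem (hU.mem_nhds hz) hlast)
      ((hquot j).differentiableAt (hU.mem_nhds hz))]
    ring
  exact eq_zero_of_sum_sq_eq_zero_of_ofReal_eq_mul (hiso z hz) hΔ i
end
end
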